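/- Let f : H → G be a homomorphism of Hilbert algebras, I an implicative filter of G, and J an irreducible implicative filter of H such that f⁻¹(I) ⊆ J. Then there exists an irreducible implicative filter K of G such that I ⊆ K and f⁻¹(K) = J. -/

import Mathlib

/-- A Hilbert algebra `(H, →, 1)`. -/
structure HilbertAlgebra (H : Type*) where
  imp : H → H → H
  one : H
  ax1 : ∀ a b : H, imp a (imp b a) = one
  ax2 : ∀ a b c : H, imp (imp a (imp b c)) (imp (imp a b) (imp a c)) = one
  ax3 : ∀ a b : H, imp a b = one → imp b a = one → a = b

namespace HilbertAlgebra

variable {H : Type*} (hH : HilbertAlgebra H)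

/-- The natural order: `a ≤ b` iff `a → b = 1`. -/
def le (a b : H) : Prop := hH.imp a b = hH.one

/-- Implicative filter. -/
def IsImplicativeFilter (F : Set H) : Prop :=
  hH.one ∈ F ∧ ∀ a b : H, a ∈ F → hH.imp a b ∈ F → b ∈ F

/-- Irreducible implicative filter. -/
def IsIrreducible (F : Set H) : Prop :=
  hH.IsImplicativeFilter F ∧ F ≠ Set.univ ∧
    ∀ F₁ F₂ : Set H, hH.IsImplicativeFilter F₁ → hH.IsImplicativeFilter F₂ →
      F = F₁ ∩ F₂ → (F = F₁ ∨ F = F₂)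

/-- Order-ideal: nonempty, downward closed, up-directed (w.r.t. the natural order). -/
def IsOrderIdeal (I : Set H) : Prop :=
  I.Nonempty ∧ (∀ a b : H, b ∈ I → hH.le a b → a ∈ I) ∧
    ∀ a b : H, a ∈ I → b ∈ I → ∃ c ∈ I, hH.le a c ∧ hH.le b c

/-- `φ(a) = {P ∈ X(H) : a ∈ P}`. -/
def phi (a : H) : Set (Set H) := {P | hH.IsIrreducible P ∧ a ∈ P}

/-- An upset of `X(H)` (the poset of irreducible implicative filters, ordered by `⊆`). -/
def IsUpsetX (U : Set (Set H)) : Prop :=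
  (∀ P ∈ U, hH.IsIrreducible P) ∧
    ∀ P Q : Set H, P ∈ U → hH.IsIrreducible Q → P ⊆ Q → Q ∈ U

/-- The Heyting implication `U ⇒ V` on upsets of `X(H)`. -/
def impUps (U V : Set (Set H)) : Set (Set H) :=
  {P | hH.IsIrreducible P ∧ ∀ Q : Set H, hH.IsIrreducible Q → P ⊆ Q → Q ∈ U → Q ∈ V}

/-- `FC(H)`: finite nonempty intersections of sets of the form `φ(a)`. -/
def FC : Set (Set (Set H)) :=
  {U | ∃ l : List H, l ≠ [] ∧ U = ⋂ a ∈ l, hH.phi a}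

/-- `X*(H)`: implicative filters that are intersections of finitely many (at least one)
irreducible implicative filters. -/
def XStar : Set (Set H) :=
  {F | ∃ S : Set (Set H), S.Finite ∧ S.Nonempty ∧ (∀ P ∈ S, hH.IsIrreducible P) ∧ F = ⋂₀ S}

/-- `Φ(a) = {F ∈ X*(H) : a ∈ F}`. -/
def Phi (a : H) : Set (Set H) := {F | F ∈ hH.XStar ∧ a ∈ F}

/-- An upset of `X*(H)` (ordered by `⊆`). -/
def IsUpsetXStar (U : Set (Set H)) : Prop :=
  (∀ F ∈ U, F ∈ hH.XStar) ∧
    ∀ F K : Set H, F ∈ U → K ∈ hH.XStar → F ⊆ K → K ∈ U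

/-- The implication `U ⇒ V` on upsets of `X*(H)`. -/
def impUpsStar (U V : Set (Set H)) : Set (Set H) :=
  {F | F ∈ hH.XStar ∧ ∀ K : Set H, K ∈ hH.XStar → F ⊆ K → K ∈ U → K ∈ V}

/-- Homomorphism of Hilbert algebras. -/
def IsHom {G : Type*} (hG : HilbertAlgebra G) (f : H → G) : Prop :=
  f hH.one = hG.one ∧ ∀ a b : H, f (hH.imp a b) = hG.imp (f a) (f b)

end HilbertAlgebra

/-- A Hilbert algebra with supremum: `(H, ∨)` is a join-semilattice whose induced
order has greatest element `1`, and `a → b = 1` iff `a ∨ b = b`. -/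
structure HilbertSup (H : Type*) extends HilbertAlgebra H where
  sup : H → H → H
  sup_comm : ∀ a b : H, sup a b = sup b a
  sup_assoc : ∀ a b c : H, sup (sup a b) c = sup a (sup b c)
  sup_idem : ∀ a : H, sup a a = a
  sup_one : ∀ a : H, sup a one = one
  imp_eq_one_iff : ∀ a b : H, imp a b = one ↔ sup a b = b

/-- Morphism of Hilbert algebras with supremum. -/
def HilbertSup.IsHomSup {H G : Type*} (hH : HilbertSup H) (hG : HilbertSup G)
    (f : H → G) : Prop :=
  hH.toHilbertAlgebra.IsHom hG.toHilbertAlgebra f ∧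
    ∀ a b : H, f (hH.sup a b) = hG.sup (f a) (f b)

/-- An implicative semilattice: a meet-semilattice with greatest element and a binary
operation `him` such that `a ⊓ b ≤ c ↔ a ≤ him b c`. -/
class ImplicativeSemilattice (G : Type*) extends SemilatticeInf G, OrderTop G where
  him : G → G → G
  inf_le_iff_le_him : ∀ a b c : G, a ⊓ b ≤ c ↔ a ≤ him b c


/-!
Among the implicative filters `K ⊇ I` of `G` with `f⁻¹(K) ⊆ J` (a family containing `I` and
closed under unions of chains) take a maximal one `K` by Zorn's lemma. For `j ∈ J` the filter
`{x | f j → x ∈ K}` still belongs to the family, because `f j → f c = f (j → c)`; maximality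
puts `f j` in `K`, so `f⁻¹(K) = J`. If `K = F₁ ∩ F₂` with both `F_i ⊋ K`, each `F_i` contains
some `f cᵢ` with `cᵢ ∉ J`; irreducibility of `J` yields `c ∉ J` with `cᵢ → c ∈ J`, whence
`f c ∈ F₁ ∩ F₂ = K`, a contradiction.
-/

namespace HilbertAlgebra

variable {H : Type*} (hH : HilbertAlgebra H)

theorem eq_one_of_one_imp_eq_one {x : H} (h : hH.imp hH.one x = hH.one) : x = hH.one :=
  (hH.ax3 x _ (hH.ax1 x hH.one) (by rw [h]; exact h)).trans h

theorem imp_self (a : H) : hH.imp a a = hH.one := by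
  have h := hH.ax2 a (hH.imp a a) a
  rw [hH.ax1 a (hH.imp a a), hH.ax1 a a] at h
  exact hH.eq_one_of_one_imp_eq_one (hH.eq_one_of_one_imp_eq_one h)

variable {hH}

namespace IsImplicativeFilter

variable {F : Set H}

theorem mem_of_imp_eq_one (hF : hH.IsImplicativeFilter F) {a b : H} (ha : a ∈ F)
    (hab : hH.imp a b = hH.one) : b ∈ F :=
  hF.2 a b ha (hab ▸ hF.1)

theorem imp_mem (hF : hH.IsImplicativeFilter F) (a : H) {x : H} (hx : x ∈ F) :
    hH.imp a x ∈ F :=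
  hF.mem_of_imp_eq_one hx (hH.ax1 x a)

theorem subset_setOf_imp_mem (hF : hH.IsImplicativeFilter F) (a : H) :
    F ⊆ {x | hH.imp a x ∈ F} :=
  fun _ hx => hF.imp_mem a hx

theorem mem_setOf_imp_mem_self (hF : hH.IsImplicativeFilter F) (a : H) :
    a ∈ {x | hH.imp a x ∈ F} :=
  show hH.imp a a ∈ F from hH.imp_self a ▸ hF.1

theorem setOf_imp_mem (hF : hH.IsImplicativeFilter F) (a : H) :
    hH.IsImplicativeFilter {x | hH.imp a x ∈ F} := by
  refine ⟨hF.imp_mem a hF.1, fun b c hb hbc => ?_⟩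
  have hS := hF.mem_of_imp_eq_one hbc (hH.ax2 a b c)
  exact hF.2 _ _ hb hS

end IsImplicativeFilter

theorem isImplicativeFilter_sUnion {C : Set (Set H)} (hC : ∀ F ∈ C, hH.IsImplicativeFilter F)
    (hchain : IsChain (· ⊆ ·) C) (hne : C.Nonempty) : hH.IsImplicativeFilter (⋃₀ C) := by
  obtain ⟨F, hF⟩ := hne
  refine ⟨⟨F, hF, (hC F hF).1⟩, ?_⟩
  rintro a b ⟨F₁, hF₁, ha⟩ ⟨F₂, hF₂, hab⟩
  rcases hchain.total hF₁ hF₂ with h | h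
  · exact ⟨F₂, hF₂, (hC F₂ hF₂).2 a b (h ha) hab⟩
  · exact ⟨F₁, hF₁, (hC F₁ hF₁).2 a b ha (h hab)⟩

theorem IsIrreducible.exists_imp_mem {J : Set H} (hJ : hH.IsIrreducible J) {a b : H}
    (ha : a ∉ J) (hb : b ∉ J) : ∃ c ∉ J, hH.imp a c ∈ J ∧ hH.imp b c ∈ J := by
  by_contra! hcon
  have hJeq : J = {c | hH.imp a c ∈ J} ∩ {c | hH.imp b c ∈ J} :=
    (Set.subset_inter (hJ.1.subset_setOf_imp_mem a) (hJ.1.subset_setOf_imp_mem b)).antisymm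
      fun c ⟨hac, hbc⟩ => by_contra fun hc => hcon c hc hac hbc
  rcases hJ.2.2 _ _ (hJ.1.setOf_imp_mem a) (hJ.1.setOf_imp_mem b) hJeq with h | h
  · exact ha (h ▸ hJ.1.mem_setOf_imp_mem_self a)
  · exact hb (h ▸ hJ.1.mem_setOf_imp_mem_self b)

section Extension

variable {G : Type*} {hG : HilbertAlgebra G} {f : H → G} {I : Set G} {J : Set H}

theorem exists_maximal_filter_preimage_subset (hI : hG.IsImplicativeFilter I)
    (hIJ : f ⁻¹' I ⊆ J) :
    ∃ K, Maximal (fun K => hG.IsImplicativeFilter K ∧ I ⊆ K ∧ f ⁻¹' K ⊆ J) K := by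
  obtain ⟨K, -, hK⟩ := zorn_subset_nonempty
    {K | hG.IsImplicativeFilter K ∧ I ⊆ K ∧ f ⁻¹' K ⊆ J}
    (fun C hCS hchain ⟨F, hF⟩ =>
      ⟨⋃₀ C,
        ⟨isImplicativeFilter_sUnion (fun F hF => (hCS hF).1) hchain ⟨F, hF⟩,
          (hCS hF).2.1.trans (Set.subset_sUnion_of_mem hF),
          fun _ ⟨F', hF', hx⟩ => (hCS hF').2.2 hx⟩,
        fun _ => Set.subset_sUnion_of_mem⟩)
    I ⟨hI, subset_rfl, hIJ⟩
  exact ⟨K, hK⟩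

theorem preimage_eq_of_maximal (hf : hH.IsHom hG f) (hJ : hH.IsImplicativeFilter J) {K : Set G}
    (hK : Maximal (fun K => hG.IsImplicativeFilter K ∧ I ⊆ K ∧ f ⁻¹' K ⊆ J) K) :
    f ⁻¹' K = J := by
  obtain ⟨⟨hKf, hIK, hKJ⟩, hKmax⟩ := hK
  refine hKJ.antisymm fun j hj => ?_
  have hext : {x | hG.imp (f j) x ∈ K} ⊆ K := by
    refine hKmax ⟨hKf.setOf_imp_mem _, hIK.trans (hKf.subset_setOf_imp_mem _), fun c hc => ?_⟩
      (hKf.subset_setOf_imp_mem _)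
    have hjc : hH.imp j c ∈ J := hKJ (show f (hH.imp j c) ∈ K by rw [hf.2]; exact hc)
    exact hJ.2 j c hj hjc
  exact hext (hKf.mem_setOf_imp_mem_self (f j))

theorem isIrreducible_of_maximal (hf : hH.IsHom hG f) (hJ : hH.IsIrreducible J) {K : Set G}
    (hK : Maximal (fun K => hG.IsImplicativeFilter K ∧ I ⊆ K ∧ f ⁻¹' K ⊆ J) K) :
    hG.IsIrreducible K := by
  have hKJ : f ⁻¹' K = J := preimage_eq_of_maximal hf hJ.1 hK
  refine ⟨hK.1.1, fun hKuniv => hJ.2.1 (by rw [← hKJ, hKuniv, Set.preimage_univ]), ?_⟩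
  intro F₁ F₂ hF₁ hF₂ hKeq
  by_contra! hne
  have escape : ∀ F, hG.IsImplicativeFilter F → K ⊆ F → K ≠ F → ∃ c ∉ J, f c ∈ F :=
    fun F hF hKF hKF' => by
      by_contra! hFJ
      exact hKF' (hK.eq_of_subset ⟨hF, hK.1.2.1.trans hKF, fun c hc => by_contra (hFJ c · hc)⟩
        hKF)
  have hK₁ : K ⊆ F₁ := hKeq ▸ Set.inter_subset_left
  have hK₂ : K ⊆ F₂ := hKeq ▸ Set.inter_subset_right
  obtain ⟨c₁, hc₁, hfc₁⟩ := escape F₁ hF₁ hK₁ hne.1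
  obtain ⟨c₂, hc₂, hfc₂⟩ := escape F₂ hF₂ hK₂ hne.2
  obtain ⟨c, hc, hc₁c, hc₂c⟩ := hJ.exists_imp_mem hc₁ hc₂
  have mem_of_imp_mem : ∀ {F a}, hG.IsImplicativeFilter F → K ⊆ F → f a ∈ F →
      hH.imp a c ∈ J → f c ∈ F := fun hF hKF ha hac =>
    hF.2 _ _ ha (hKF (by rw [← hf.2, ← Set.mem_preimage, hKJ]; exact hac))
  have hfc : f c ∈ K :=
    hKeq ▸ ⟨mem_of_imp_mem hF₁ hK₁ hfc₁ hc₁c, mem_of_imp_mem hF₂ hK₂ hfc₂ hc₂c⟩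
  exact hc (hKJ ▸ hfc)

end Extension

end HilbertAlgebra

theorem stmt_15 {H G : Type*} (hH : HilbertAlgebra H) (hG : HilbertAlgebra G) (f : H → G)
    (hf : hH.IsHom hG f) (I : Set G) (hI : hG.IsImplicativeFilter I)
    (J : Set H) (hJ : hH.IsIrreducible J) (hIJ : f ⁻¹' I ⊆ J) :
    ∃ K : Set G, hG.IsIrreducible K ∧ I ⊆ K ∧ f ⁻¹' K = J := by
  obtain ⟨K, hK⟩ := HilbertAlgebra.exists_maximal_filter_preimage_subset hI hIJ
  exact ⟨K, HilbertAlgebra.isIrreducible_of_maximal hf hJ hK, hK.1.2.1,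
    HilbertAlgebra.preimage_eq_of_maximal hf hJ.1 hK⟩
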